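/- arXiv:1305.1453 — 3 statements merged into one kernel-verified Lean document; each statement's English description precedes it below -/
import Mathlib

section
/- Every complete p-uniformly convex metric space X with parameter k > 0 has property (P): given two bounded sequences (x_n) and (z_n) in X, there exists a point z ∈ ⋂_{n ≥ 1} cov({z_j : j ≥ n}) such that limsup_{n → ∞} d(z, x_n) ≤ limsup_{j → ∞} limsup_{n → ∞} d(z_j, x_n). -/
/-!
Let `r y = limsup_n dist y (x_n)` be the asymptotic radius of `(x_n)`. It is 1-Lipschitz, and
`r ^ p` inherits from the functions `dist z · ^ p` the inequality defining `p`-uniform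
convexity. Closed balls are closed under midpoints, hence so are the hulls
`A_n = cov {z_j : j ≥ n}`, which are closed, decreasing, and contain `z_j` for `j ≥ n`; so
`inf_{A_n} r ^ p ≤ L ^ p` with `L = limsup_j r (z_j)`. Pick `w_n ∈ A_n` with `r (w_n) ^ p`
within `1 / (n + 1)` of `inf_{A_n} r ^ p`. For `N ≤ n` the midpoint of `w_N` and `w_n` lies in
`A_N`, so uniform convexity bounds `dist w_N w_n ^ p` by the gap between `inf_{A_N} r ^ p` and
the limit of these increasing infima: `(w_n)` is Cauchy, and its limit `z` lies in every `A_n`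
with `r z ≤ L`.
-/

/-- `cov A` is the intersection of all closed balls containing `A`. -/
def ballCov {X : Type*} [MetricSpace X] (A : Set X) : Set X :=
  ⋂₀ {B : Set X | (∃ c : X, ∃ r : ℝ, B = Metric.closedBall c r) ∧ A ⊆ B}

open Filter Topology Metric

section Midpoints

variable {X : Type*} [MetricSpace X]

def IsMetricMidpoint (x y m : X) : Prop :=
  dist x m = dist x y / 2 ∧ dist m y = dist x y / 2

def IsMidpointConvex (s : Set X) : Prop :=
  ∀ ⦃x y m : X⦄, x ∈ s → y ∈ s → IsMetricMidpoint x y m → m ∈ s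

/-- `X` is `p`-uniformly convex with parameter `k` iff `dist z · ^ p` has this property for
every `z`. -/
def UniformlyMidpointConvex (p k : ℝ) (f : X → ℝ) : Prop :=
  ∀ ⦃x y m : X⦄, IsMetricMidpoint x y m →
    f m ≤ 1 / 2 * f x + 1 / 2 * f y - k / 8 * dist x y ^ p

variable {p k : ℝ}

theorem isMidpointConvex_closedBall (hp : 0 < p) (hk : 0 ≤ k)
    (hX : ∀ z : X, UniformlyMidpointConvex p k (dist z · ^ p)) (c : X) (r : ℝ) :
    IsMidpointConvex (closedBall c r) := by
  intro x y m hx hy hm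
  rw [mem_closedBall, dist_comm] at hx hy ⊢
  have hr : 0 ≤ r := dist_nonneg.trans hx
  have hxp := Real.rpow_le_rpow dist_nonneg hx hp.le
  have hyp := Real.rpow_le_rpow dist_nonneg hy hp.le
  have hgap : 0 ≤ k / 8 * dist x y ^ p := by positivity
  rw [← Real.rpow_le_rpow_iff dist_nonneg hr hp]
  linarith [hX c hm]

theorem UniformlyMidpointConvex.dist_rpow_le {f : X → ℝ} {s : Set X}
    (hf : UniformlyMidpointConvex p k f) (hs : IsMidpointConvex s)
    (geo : ∀ x y : X, ∃ m, IsMetricMidpoint x y m) {b : ℝ} (hb : ∀ y ∈ s, b ≤ f y)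
    {x y : X} (hx : x ∈ s) (hy : y ∈ s) :
    k / 8 * dist x y ^ p ≤ 1 / 2 * f x + 1 / 2 * f y - b := by
  obtain ⟨m, hm⟩ := geo x y
  linarith [hf hm, hb m (hs hx hy hm)]

end Midpoints

section BallCov

variable {X : Type*} [MetricSpace X] {A B : Set X}

theorem mem_ballCov {x : X} :
    x ∈ ballCov A ↔ ∀ c r, A ⊆ closedBall c r → x ∈ closedBall c r := by
  simp only [ballCov, Set.mem_sInter, Set.mem_ofPred_eq]
  constructor
  · intro h c r hA
    exact h _ ⟨⟨c, r, rfl⟩, hA⟩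
  · rintro h _ ⟨⟨c, r, rfl⟩, hA⟩
    exact h c r hA

theorem subset_ballCov : A ⊆ ballCov A :=
  fun _ hx => mem_ballCov.2 fun _ _ hA => hA hx

theorem ballCov_mono (h : A ⊆ B) : ballCov A ⊆ ballCov B :=
  fun _ hx => mem_ballCov.2 fun c r hB => mem_ballCov.1 hx c r (h.trans hB)

theorem isClosed_ballCov : IsClosed (ballCov A) :=
  isClosed_sInter <| by
    rintro _ ⟨⟨c, r, rfl⟩, -⟩
    exact isClosed_closedBall

theorem isMidpointConvex_ballCov (h : ∀ (c : X) r, IsMidpointConvex (closedBall c r)) :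
    IsMidpointConvex (ballCov A) := fun _ _ _ hx hy hm =>
  mem_ballCov.2 fun c r hA => h c r (mem_ballCov.1 hx c r hA) (mem_ballCov.1 hy c r hA) hm

theorem exists_mem_ballCov_tail_lt {u : ℕ → X} {g : X → ℝ} {c : ℝ}
    (hg : IsBoundedUnder (· ≤ ·) atTop (g ∘ u)) (hc : limsup (g ∘ u) atTop < c) (n : ℕ) :
    ∃ y ∈ ballCov (u '' {j | n ≤ j}), g y < c :=
  let ⟨j, hj, hjn⟩ := ((eventually_lt_of_limsup_lt hc hg).and (eventually_ge_atTop n)).exists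
  ⟨u j, subset_ballCov ⟨j, hjn, rfl⟩, hj⟩

end BallCov

section AsymptoticRadius

variable {X ι : Type*} [MetricSpace X] {l : Filter ι} {x : ι → X}

noncomputable def asymptoticRadius (l : Filter ι) (x : ι → X) (y : X) : ℝ :=
  limsup (fun i => dist y (x i)) l

theorem isBoundedUnder_dist (hx : Bornology.IsBounded (Set.range x)) (y : X) :
    IsBoundedUnder (· ≤ ·) l (fun i => dist y (x i)) := by
  obtain ⟨R, hR⟩ := hx.subset_closedBall y
  exact isBoundedUnder_of ⟨R, fun i => by simpa [dist_comm] using hR ⟨i, rfl⟩⟩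

theorem eventually_dist_lt_of_asymptoticRadius_lt (hx : Bornology.IsBounded (Set.range x))
    {y : X} {c : ℝ} (h : asymptoticRadius l x y < c) : ∀ᶠ i in l, dist y (x i) < c :=
  eventually_lt_of_limsup_lt h (isBoundedUnder_dist hx y)

theorem asymptoticRadius_le_of_eventually [l.NeBot] {y : X} {c : ℝ}
    (h : ∀ᶠ i in l, dist y (x i) ≤ c) : asymptoticRadius l x y ≤ c :=
  limsup_le_of_le (isCoboundedUnder_le_of_le l fun _ => dist_nonneg) h

theorem asymptoticRadius_nonneg [l.NeBot] (hx : Bornology.IsBounded (Set.range x)) (y : X) :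
    0 ≤ asymptoticRadius l x y :=
  le_limsup_of_frequently_le (.of_forall fun _ => dist_nonneg) (isBoundedUnder_dist hx y)

theorem lipschitzWith_asymptoticRadius [l.NeBot] (hx : Bornology.IsBounded (Set.range x)) :
    LipschitzWith 1 (asymptoticRadius l x) := by
  refine LipschitzWith.of_le_add fun y w => le_of_forall_pos_le_add fun ε hε => ?_
  have hw := eventually_dist_lt_of_asymptoticRadius_lt hx
    (lt_add_of_pos_right (asymptoticRadius l x w) hε)
  refine asymptoticRadius_le_of_eventually (hw.mono fun i hi => ?_)
  linarith [dist_triangle y w (x i)]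

theorem UniformlyMidpointConvex.asymptoticRadius_rpow [l.NeBot] {p k : ℝ} (hp : 0 < p)
    (hX : ∀ z : X, UniformlyMidpointConvex p k (dist z · ^ p))
    (hx : Bornology.IsBounded (Set.range x)) :
    UniformlyMidpointConvex p k (asymptoticRadius l x · ^ p) := by
  intro a b m hm
  set r := asymptoticRadius l x
  set g : ℝ → ℝ := fun ε =>
    1 / 2 * (r a + ε) ^ p + 1 / 2 * (r b + ε) ^ p - k / 8 * dist a b ^ p
  have hg : Continuous g := by
    have := Real.continuous_rpow_const hp.le
    fun_prop
  suffices h : ∀ ε > 0, r m ^ p ≤ g ε by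
    simpa [g] using ge_of_tendsto (hg.tendsto 0 |>.mono_left nhdsWithin_le_nhds)
      (eventually_nhdsWithin_of_forall (s := Set.Ioi 0) h)
  intro ε hε
  have hev : ∀ᶠ i in l, dist m (x i) ^ p ≤ g ε := by
    filter_upwards [eventually_dist_lt_of_asymptoticRadius_lt hx (lt_add_of_pos_right (r a) hε),
      eventually_dist_lt_of_asymptoticRadius_lt hx (lt_add_of_pos_right (r b) hε)] with i ha hb
    have hxi := hX (x i) hm
    simp only [dist_comm (x i)] at hxi
    have := Real.rpow_le_rpow dist_nonneg ha.le hp.le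
    have := Real.rpow_le_rpow dist_nonneg hb.le hp.le
    simp only [g]
    linarith
  have hg0 : 0 ≤ g ε := let ⟨_, hi⟩ := hev.exists; (Real.rpow_nonneg dist_nonneg p).trans hi
  rw [← Real.le_rpow_inv_iff_of_pos (asymptoticRadius_nonneg hx m) hg0 hp]
  exact asymptoticRadius_le_of_eventually <| hev.mono fun i hi =>
    (Real.le_rpow_inv_iff_of_pos dist_nonneg hg0 hp).2 hi

end AsymptoticRadius

section Minimization

variable {X : Type*} [MetricSpace X] {p k : ℝ}

theorem cauchySeq_of_dist_rpow_le {β : Type*} [Nonempty β] [SemilatticeSup β] (hp : 0 < p)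
    {w : β → X} {ε : β → ℝ} (h : ∀ N n, N ≤ n → dist (w N) (w n) ^ p ≤ ε N)
    (hε : Tendsto ε atTop (𝓝 0)) : CauchySeq w := by
  have hε0 N : 0 ≤ ε N := (Real.rpow_nonneg dist_nonneg p).trans (h N N le_rfl)
  refine cauchySeq_of_le_tendsto_0' (fun N => ε N ^ p⁻¹)
    (fun N n hNn => (Real.le_rpow_inv_iff_of_pos dist_nonneg (hε0 N) hp).2 (h N n hNn)) ?_
  simpa [Real.zero_rpow (inv_ne_zero hp.ne')] using hε.rpow_const (.inr (inv_pos.2 hp).le)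

theorem UniformlyMidpointConvex.exists_mem_iInter_le [CompleteSpace X] {f : X → ℝ}
    (hp : 0 < p) (hk : 0 < k) (geo : ∀ x y : X, ∃ m, IsMetricMidpoint x y m)
    (hf : UniformlyMidpointConvex p k f) (hf_lsc : LowerSemicontinuous f)
    (hf_bdd : BddBelow (Set.range f)) {A : ℕ → Set X} (hA : Antitone A)
    (hA_closed : ∀ n, IsClosed (A n)) (hA_conv : ∀ n, IsMidpointConvex (A n)) {c : ℝ}
    (hc : ∀ n, ∀ c' > c, ∃ y ∈ A n, f y < c') :
    ∃ z ∈ ⋂ n, A n, f z ≤ c := by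
  set S : ℕ → ℝ := fun n => sInf (f '' A n)
  have hne n : (f '' A n).Nonempty :=
    let ⟨y, hy, _⟩ := hc n (c + 1) (lt_add_one c); ⟨f y, y, hy, rfl⟩
  have hbdd n : BddBelow (f '' A n) := hf_bdd.mono (Set.image_subset_range f _)
  have hS_le n y (hy : y ∈ A n) : S n ≤ f y := csInf_le (hbdd n) ⟨y, hy, rfl⟩
  have hS_mono : Monotone S := fun n m hnm =>
    csInf_le_csInf (hbdd n) (hne m) (Set.image_mono (hA hnm))
  have hS_c n : S n ≤ c := le_of_forall_gt fun c' hc' =>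
    let ⟨y, hy, hyc⟩ := hc n c' hc'; (hS_le n y hy).trans_lt hyc
  have hS_bdd : BddAbove (Set.range S) := ⟨c, Set.forall_mem_range.2 hS_c⟩
  set s := ⨆ n, S n
  have hS_s n : S n ≤ s := le_ciSup hS_bdd n
  have hS_tendsto : Tendsto S atTop (𝓝 s) := tendsto_atTop_ciSup hS_mono hS_bdd
  set δ : ℕ → ℝ := fun n => 1 / ((n : ℝ) + 1)
  have hδ_anti : Antitone δ := fun n m hnm => Nat.one_div_le_one_div hnm
  have hδ_tendsto : Tendsto δ atTop (𝓝 0) := tendsto_one_div_add_atTop_nhds_zero_nat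
  choose w hwA hwf using fun n =>
    show ∃ y ∈ A n, f y < S n + δ n from
      let ⟨_, ⟨y, hy, rfl⟩, hlt⟩ := Real.lt_sInf_add_pos (hne n) (by positivity : 0 < δ n)
      ⟨y, hy, hlt⟩
  have hw_cauchy : CauchySeq w := by
    refine cauchySeq_of_dist_rpow_le hp (ε := fun N => (s - S N + δ N) / (k / 8))
      (fun N n hNn => ?_) ?_
    · have := hf.dist_rpow_le (hA_conv N) geo (hS_le N) (hwA N) (hA hNn (hwA n))
      rw [le_div_iff₀' (by positivity)]
      linarith [hwf N, hwf n, hS_s N, hS_s n, hδ_anti hNn]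
    · simpa using
        (((tendsto_const_nhds (x := s)).sub hS_tendsto).add hδ_tendsto).div_const (k / 8)
  obtain ⟨z, hz⟩ := cauchySeq_tendsto_of_complete hw_cauchy
  refine ⟨z, Set.mem_iInter.2 fun n => (hA_closed n).mem_of_tendsto hz ?_, ?_⟩
  · exact eventually_atTop.2 ⟨n, fun m hm => hA hm (hwA m)⟩
  · refine le_of_forall_lt_imp_le_of_dense fun y hy => ?_
    refine ge_of_tendsto (by simpa using hδ_tendsto.const_add c) ?_
    filter_upwards [hz.eventually (hf_lsc z y hy)] with m hm
    linarith [hwf m, hS_c m]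
end Minimization

/-- Every complete `p`-uniformly convex space has property (P): given two bounded
sequences `(x_n)` and `(z_n)`, there is `z ∈ ⋂ n, cov {z_j : j ≥ n}` with
`limsup_n dist z (x_n) ≤ limsup_j limsup_n dist (z_j) (x_n)`. -/
theorem property_P_p_uniformly_convex
    {X : Type*} [MetricSpace X] [CompleteSpace X]
    (p k : ℝ) (hp : 1 ≤ p) (hk : 0 < k)
    (geo : ∀ x y : X, ∃ m : X, dist x m = dist x y / 2 ∧ dist m y = dist x y / 2)
    (puc : ∀ x y z m : X,
      dist x m = dist x y / 2 → dist m y = dist x y / 2 →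
      dist z m ^ p ≤ (1 / 2) * dist z x ^ p + (1 / 2) * dist z y ^ p
        - (k / 8) * dist x y ^ p)
    (xn zn : ℕ → X)
    (hxn : Bornology.IsBounded (Set.range xn))
    (hzn : Bornology.IsBounded (Set.range zn)) :
    ∃ z ∈ ⋂ n : ℕ, ballCov (zn '' {j | n ≤ j}),
      Filter.limsup (fun n => dist z (xn n)) Filter.atTop ≤
        Filter.limsup
          (fun j => Filter.limsup (fun n => dist (zn j) (xn n)) Filter.atTop)
          Filter.atTop := by
  have hp0 : 0 < p := one_pos.trans_le hp
  have hX : ∀ z : X, UniformlyMidpointConvex p k (dist z · ^ p) :=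
    fun z x y m hm => puc x y z m hm.1 hm.2
  set r := asymptoticRadius atTop xn
  have hr_nonneg : ∀ y, 0 ≤ r y := asymptoticRadius_nonneg hxn
  have hr_lip : LipschitzWith 1 r := lipschitzWith_asymptoticRadius hxn
  set L := limsup (r ∘ zn) atTop
  have hL_bdd : IsBoundedUnder (· ≤ ·) atTop (r ∘ zn) := by
    refine BddAbove.isBoundedUnder_of_range ?_
    rw [Set.range_comp]
    exact (hr_lip.isBounded_image hzn).bddAbove
  have hL_nonneg : 0 ≤ L := le_limsup_of_frequently_le (.of_forall fun j => hr_nonneg _) hL_bdd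
  have hL : ∀ n, ∀ c > L ^ p, ∃ y ∈ ballCov (zn '' {j | n ≤ j}), r y ^ p < c := by
    intro n c hc
    have hc0 : 0 ≤ c := (Real.rpow_nonneg hL_nonneg p).trans hc.le
    obtain ⟨y, hy, hyc⟩ := exists_mem_ballCov_tail_lt hL_bdd
      ((Real.lt_rpow_inv_iff_of_pos hL_nonneg hc0 hp0).2 hc) n
    exact ⟨y, hy, (Real.lt_rpow_inv_iff_of_pos (hr_nonneg y) hc0 hp0).1 hyc⟩
  have hr_conv : UniformlyMidpointConvex p k (r · ^ p) :=
    UniformlyMidpointConvex.asymptoticRadius_rpow hp0 hX hxn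
  obtain ⟨z, hz, hzL⟩ := hr_conv.exists_mem_iInter_le
    (A := fun n => ballCov (zn '' {j | n ≤ j})) hp0 hk geo
    (hr_lip.continuous.rpow_const fun _ => .inr hp0.le).lowerSemicontinuous
    ⟨0, Set.forall_mem_range.2 fun y => Real.rpow_nonneg (hr_nonneg y) p⟩
    (fun n m hnm => ballCov_mono (Set.image_mono fun j hj => hnm.trans hj))
    (fun _ => isClosed_ballCov)
    (fun _ => isMidpointConvex_ballCov (isMidpointConvex_closedBall hp0 hk.le hX)) hL
  exact ⟨z, hz, (Real.rpow_le_rpow_iff (hr_nonneg z) hL_nonneg hp0).1 hzL⟩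
end

section
/- Let X be a 2-uniformly convex metric space with parameter k > 0. For any x, y, z ∈ X and any midpoint m of y and z, one has d(x,m)^2 ≤ (4/k)·((1/2)·d(x,y)^2 + (1/2)·d(x,z)^2 − (1/4)·d(y,z)^2). -/
/-! Let `q` be a midpoint of `x` and `m`. Applying 2-uniform convexity to the segment `[x, m]`,
seen from `y` and from `z`, and adding, bounds `d(y,q)² + d(z,q)²` by
`½ d(x,y)² + ½ d(x,z)² + ¼ d(y,z)² − (k/4) d(x,m)²`, since `d(y,m) = d(z,m) = d(y,z)/2`.
The triangle inequality through `q` gives `d(y,z)² ≤ 2 (d(y,q)² + d(q,z)²)`, which leaves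
`(k/4) d(x,m)² ≤ ½ d(x,y)² + ½ d(x,z)² − ¼ d(y,z)²`. -/

lemma dist_sq_le_two_mul_add_sq {X : Type*} [PseudoMetricSpace X] (y q z : X) :
    dist y z ^ 2 ≤ 2 * (dist y q ^ 2 + dist q z ^ 2) :=
  (pow_le_pow_left₀ dist_nonneg (dist_triangle y q z) 2).trans add_sq_le

lemma mul_dist_sq_midpoint_le {X : Type*} [PseudoMetricSpace X] (k : ℝ)
    (puc : ∀ x y z m : X,
      dist x m = dist x y / 2 → dist m y = dist x y / 2 →
      dist z m ^ 2 ≤ (1 / 2) * dist z x ^ 2 + (1 / 2) * dist z y ^ 2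
        - (k / 8) * dist x y ^ 2)
    {x y z m q : X} (hq1 : dist x q = dist x m / 2) (hq2 : dist q m = dist x m / 2)
    (hm1 : dist y m = dist y z / 2) (hm2 : dist m z = dist y z / 2) :
    k / 4 * dist x m ^ 2 ≤
      (1 / 2) * dist x y ^ 2 + (1 / 2) * dist x z ^ 2 - (1 / 4) * dist y z ^ 2 := by
  have hy := puc x m y q hq1 hq2
  have hz := puc x m z q hq1 hq2
  have hyz := dist_sq_le_two_mul_add_sq y q z
  rw [dist_comm y x, hm1] at hy
  rw [dist_comm z x, dist_comm z m, hm2, dist_comm z q] at hz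
  linarith

/-- In a `2`-uniformly convex space with parameter `k > 0`, for any `x y z` and any
midpoint `m` of `y` and `z`,
`dist x m ^ 2 ≤ (4 / k) * ((1/2) * dist x y ^ 2 + (1/2) * dist x z ^ 2 - (1/4) * dist y z ^ 2)`. -/
theorem two_uniformly_convex_midpoint_estimate
    {X : Type*} [MetricSpace X]
    (k : ℝ) (hk : 0 < k)
    (geo : ∀ x y : X, ∃ m : X, dist x m = dist x y / 2 ∧ dist m y = dist x y / 2)
    (puc : ∀ x y z m : X,
      dist x m = dist x y / 2 → dist m y = dist x y / 2 →
      dist z m ^ 2 ≤ (1 / 2) * dist z x ^ 2 + (1 / 2) * dist z y ^ 2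
        - (k / 8) * dist x y ^ 2)
    (x y z m : X)
    (hm1 : dist y m = dist y z / 2) (hm2 : dist m z = dist y z / 2) :
    dist x m ^ 2 ≤ (4 / k) *
      ((1 / 2) * dist x y ^ 2 + (1 / 2) * dist x z ^ 2 - (1 / 4) * dist y z ^ 2) := by
  obtain ⟨q, hq1, hq2⟩ := geo x m
  have key := mul_dist_sq_midpoint_le k puc hq1 hq2 hm1 hm2
  rw [div_mul_eq_mul_div, le_div_iff₀ hk]
  linarith
end

section
/- Let X be a complete p-uniformly convex metric space with parameter k > 0, let K be a nonempty bounded closed convex subset of X, and let T : K → X be continuous and of convex type, with inf{d(x, T x) : x ∈ K} = 0. Then T has a fixed point in K: there exists x ∈ K with T x = x. -/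
/-!
Let `ε n ↓ 0` be chosen so fast, using the convex-type property, that midpoints of
`ε (n+1)`-approximate fixed points are `ε n`-approximate fixed points. Fix a base point `z` and
let `I n` be the infimum of `dist z · ^ p` over the `ε n`-approximate fixed points; it increases
to a finite limit since `K` is bounded. For two almost-minimisers at levels `≥ n + 1`, their
midpoint is admissible at level `n`, so `p`-uniform convexity bounds their distance by the
vanishing gap between `I n` and `lim I`. Almost-minimisers thus form a Cauchy sequence, and by
continuity of `T` its limit is a fixed point.
-/

open Filter Topology

section FixedPoint

variable {X : Type*} [MetricSpace X]

def IsMidpoint (x y m : X) : Prop :=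
  dist x m = dist x y / 2 ∧ dist m y = dist x y / 2

def IsConvexType (K : Set X) (T : X → X) : Prop :=
  ∀ xn yn mn : ℕ → X, (∀ n, xn n ∈ K) → (∀ n, yn n ∈ K) →
    (∀ n, IsMidpoint (xn n) (yn n) (mn n)) →
    Tendsto (fun n => dist (xn n) (T (xn n))) atTop (𝓝 0) →
    Tendsto (fun n => dist (yn n) (T (yn n))) atTop (𝓝 0) →
    Tendsto (fun n => dist (mn n) (T (mn n))) atTop (𝓝 0)

def approxFixedPoints (K : Set X) (T : X → X) (ε : ℝ) : Set X :=
  {x ∈ K | dist x (T x) ≤ ε}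

section approxFixedPoints

variable {K : Set X} {T : X → X}

theorem approxFixedPoints_mono {ε δ : ℝ} (h : ε ≤ δ) :
    approxFixedPoints K T ε ⊆ approxFixedPoints K T δ :=
  fun _ hx => ⟨hx.1, hx.2.trans h⟩

theorem approxFixedPoints_nonempty (hK : K.Nonempty) (hinf : ⨅ x : K, dist (x : X) (T x) = 0)
    {ε : ℝ} (hε : 0 < ε) : (approxFixedPoints K T ε).Nonempty := by
  have : Nonempty K := hK.to_subtype
  obtain ⟨⟨x, hxK⟩, hx⟩ := exists_lt_of_ciInf_lt (hinf.trans_lt hε)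
  exact ⟨x, hxK, hx.le⟩

theorem isClosed_approxFixedPoints (hK : IsClosed K) (hT : ContinuousOn T K) (ε : ℝ) :
    IsClosed (approxFixedPoints K T ε) :=
  (continuous_dist.comp_continuousOn (continuousOn_id.prodMk hT)).preimage_isClosed_of_isClosed
    hK isClosed_Iic

theorem IsConvexType.exists_midpoint_mem_approxFixedPoints
    (hK : ∀ x ∈ K, ∀ y ∈ K, ∀ m, IsMidpoint x y m → m ∈ K) (hT : IsConvexType K T)
    (θ : ℝ) (hθ : 0 < θ) :
    ∃ ε, 0 < ε ∧ ∀ x y m,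
      x ∈ approxFixedPoints K T ε → y ∈ approxFixedPoints K T ε →
      IsMidpoint x y m → m ∈ approxFixedPoints K T θ := by
  by_contra! hcon
  choose x y m hx hy hm hθm using fun n : ℕ => hcon (1 / ((n : ℝ) + 1)) (by positivity)
  have hlim : ∀ u : ℕ → X,
      (∀ n : ℕ, u n ∈ approxFixedPoints K T (1 / ((n : ℝ) + 1))) →
      Tendsto (fun n => dist (u n) (T (u n))) atTop (𝓝 0) := fun u hu =>
    squeeze_zero (fun _ => dist_nonneg) (fun n => (hu n).2)
      tendsto_one_div_add_atTop_nhds_zero_nat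
  obtain ⟨n, hn⟩ := ((hT x y m (fun n => (hx n).1) (fun n => (hy n).1) hm (hlim x hx)
    (hlim y hy)).eventually (gt_mem_nhds hθ)).exists
  exact hθm n ⟨hK _ (hx n).1 _ (hy n).1 _ (hm n), hn.le⟩

end approxFixedPoints

theorem exists_seq_pos_antitone_tendsto_zero_le (G : ℝ → ℝ)
    (hG : ∀ θ, 0 < θ → 0 < G θ) :
    ∃ ε : ℕ → ℝ, (∀ n, 0 < ε n) ∧ Antitone ε ∧ Tendsto ε atTop (𝓝 0) ∧
      ∀ n, ε (n + 1) ≤ G (ε n) := by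
  let ε : ℕ → ℝ := fun n => Nat.rec 1 (fun _ e => min (G e) (e / 2)) n
  have hε_succ : ∀ n, ε (n + 1) = min (G (ε n)) (ε n / 2) := fun _ => rfl
  have hε_pos : ∀ n, 0 < ε n := by
    intro n
    induction n with
    | zero => exact one_pos
    | succ n ih => rw [hε_succ]; exact lt_min (hG _ ih) (half_pos ih)
  have hε_half : ∀ n, ε (n + 1) ≤ ε n / 2 := fun n =>
    (hε_succ n).trans_le (min_le_right _ _)
  have hε_le_pow : ∀ n, ε n ≤ (1 / 2) ^ n := by
    intro n
    induction n with
    | zero => exact le_rfl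
    | succ n ih => rw [pow_succ]; linarith [hε_half n]
  refine ⟨ε, hε_pos, antitone_nat_of_succ_le fun n => ?_, ?_, fun n => ?_⟩
  · linarith [hε_half n, hε_pos n]
  · exact squeeze_zero (fun n => (hε_pos n).le) hε_le_pow
      (tendsto_pow_atTop_nhds_zero_of_lt_one (by norm_num) (by norm_num))
  · exact (hε_succ n).trans_le (min_le_left _ _)

theorem cauchySeq_of_dist_rpow_le_s13 {u : ℕ → X} {p : ℝ} (hp : 0 < p) {δ : ℕ → ℝ}
    (hδ : Tendsto δ atTop (𝓝 0)) (h : ∀ n m, n ≤ m → dist (u n) (u m) ^ p ≤ δ n) :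
    CauchySeq u := by
  rw [Metric.cauchySeq_iff']
  intro r hr
  obtain ⟨N, hN⟩ := (hδ.eventually (gt_mem_nhds (Real.rpow_pos_of_pos hr p))).exists
  refine ⟨N, fun n hn => ?_⟩
  rw [dist_comm, ← Real.rpow_lt_rpow_iff dist_nonneg hr.le hp]
  exact (h N n hn).trans_lt hN

section UniformlyConvex

variable {p k : ℝ} (hp : 0 < p) (hk : 0 < k)
  (geo : ∀ x y : X, ∃ m, IsMidpoint x y m)
  (puc : ∀ x y z m : X, IsMidpoint x y m →
    dist z m ^ p ≤ 1 / 2 * dist z x ^ p + 1 / 2 * dist z y ^ p - k / 8 * dist x y ^ p)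
  {A : ℕ → Set X} (hne : ∀ n, (A n).Nonempty) (hanti : Antitone A)
  (hbdd : Bornology.IsBounded (A 0))
  (hmid : ∀ n x y m, x ∈ A (n + 1) → y ∈ A (n + 1) → IsMidpoint x y m → m ∈ A n)
include hp hk geo puc hne hanti hbdd hmid

theorem exists_cauchySeq_of_midpoint_mem_antitone :
    ∃ u : ℕ → X, CauchySeq u ∧ ∀ n, u n ∈ A (n + 1) := by
  obtain ⟨z, -⟩ := hne 0
  obtain ⟨r, hr⟩ := hbdd.subset_closedBall z
  let f : X → ℝ := fun x => dist z x ^ p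
  let I : ℕ → ℝ := fun n => sInf (f '' A n)
  have hbddBelow : ∀ n, BddBelow (f '' A n) := fun n =>
    ⟨0, by rintro _ ⟨x, -, rfl⟩; positivity⟩
  have hI_le : ∀ n, ∀ x ∈ A n, I n ≤ f x := fun n x hx =>
    csInf_le (hbddBelow n) ⟨x, hx, rfl⟩
  have hI_mono : Monotone I := fun n m h =>
    csInf_le_csInf (hbddBelow n) ((hne m).image f) (Set.image_mono (hanti h))
  have hI_bdd : BddAbove (Set.range I) := by
    refine ⟨r ^ p, ?_⟩
    rintro _ ⟨n, rfl⟩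
    obtain ⟨x, hx⟩ := hne n
    have hxr : dist z x ≤ r := by rw [dist_comm]; exact hr (hanti (Nat.zero_le n) hx)
    exact (hI_le n x hx).trans (Real.rpow_le_rpow dist_nonneg hxr hp.le)
  obtain ⟨R, hIR⟩ : ∃ R, Tendsto I atTop (𝓝 R) :=
    ⟨_, tendsto_atTop_ciSup hI_mono hI_bdd⟩
  have hI_le_R : ∀ n, I n ≤ R := hI_mono.ge_of_tendsto hIR
  have hnear : ∀ n : ℕ, ∃ x ∈ A (n + 1), f x < I (n + 1) + 1 / ((n : ℝ) + 1) := fun n =>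
    let ⟨_, ⟨x, hx, rfl⟩, hlt⟩ := exists_lt_of_csInf_lt ((hne (n + 1)).image f)
      (lt_add_of_pos_right (I (n + 1)) (by positivity : (0 : ℝ) < 1 / ((n : ℝ) + 1)))
    ⟨x, hx, hlt⟩
  choose u huA hu using hnear
  refine ⟨u, cauchySeq_of_dist_rpow_le_s13 hp (δ := fun n => 8 / k * (R - I n + 1 / ((n : ℝ) + 1)))
    ?_ fun n m hnm => ?_, huA⟩
  · simpa using (((tendsto_const_nhds (x := R)).sub hIR).add
      tendsto_one_div_add_atTop_nhds_zero_nat).const_mul (8 / k)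
  · obtain ⟨μ, hμ⟩ := geo (u n) (u m)
    have hμ_le := hI_le n μ (hmid n _ _ μ (huA n) (hanti (by omega) (huA m)) hμ)
    have hm_le : 1 / ((m : ℝ) + 1) ≤ 1 / ((n : ℝ) + 1) := by gcongr
    have hkey : k / 8 * dist (u n) (u m) ^ p ≤ R - I n + 1 / ((n : ℝ) + 1) := by
      linarith [puc (u n) (u m) z μ hμ, hu n, hu m, hI_le_R (n + 1), hI_le_R (m + 1)]
    rw [div_mul_eq_mul_div, le_div_iff₀ hk]
    linarith

theorem nonempty_iInter_of_midpoint_mem_antitone [CompleteSpace X]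
    (hcl : ∀ n, IsClosed (A n)) : (⋂ n, A n).Nonempty := by
  obtain ⟨u, hu, huA⟩ :=
    exists_cauchySeq_of_midpoint_mem_antitone hp hk geo puc hne hanti hbdd hmid
  obtain ⟨w, hw⟩ := cauchySeq_tendsto_of_complete hu
  refine ⟨w, Set.mem_iInter.2 fun n => (hcl n).mem_of_tendsto hw ?_⟩
  filter_upwards [eventually_ge_atTop n] with m hm using hanti (hm.trans m.le_succ) (huA m)

end UniformlyConvex

end FixedPoint

/-- In a complete `p`-uniformly convex space with parameter `k > 0`, a continuous map
`T` of convex type on a nonempty bounded closed convex set `K` with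
`inf {dist x (T x) : x ∈ K} = 0` has a fixed point in `K`. -/
theorem convex_type_fixed_point
    {X : Type*} [MetricSpace X] [CompleteSpace X]
    (p k : ℝ) (hp : 1 ≤ p) (hk : 0 < k)
    (geo : ∀ x y : X, ∃ m : X, dist x m = dist x y / 2 ∧ dist m y = dist x y / 2)
    (puc : ∀ x y z m : X,
      dist x m = dist x y / 2 → dist m y = dist x y / 2 →
      dist z m ^ p ≤ (1 / 2) * dist z x ^ p + (1 / 2) * dist z y ^ p
        - (k / 8) * dist x y ^ p)
    (K : Set X) (hK : K.Nonempty) (hKb : Bornology.IsBounded K) (hKcl : IsClosed K)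
    (hKconv : ∀ x ∈ K, ∀ y ∈ K, ∀ m : X,
      dist x m = dist x y / 2 → dist m y = dist x y / 2 → m ∈ K)
    (T : X → X) (hTc : ContinuousOn T K)
    (hconvtype : ∀ xn yn mn : ℕ → X,
      (∀ n, xn n ∈ K) → (∀ n, yn n ∈ K) →
      (∀ n, dist (xn n) (mn n) = dist (xn n) (yn n) / 2 ∧
        dist (mn n) (yn n) = dist (xn n) (yn n) / 2) →
      Filter.Tendsto (fun n => dist (xn n) (T (xn n))) Filter.atTop (nhds 0) →
      Filter.Tendsto (fun n => dist (yn n) (T (yn n))) Filter.atTop (nhds 0) →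
      Filter.Tendsto (fun n => dist (mn n) (T (mn n))) Filter.atTop (nhds 0))
    (hinf : ⨅ x : K, dist (x : X) (T x) = 0) :
    ∃ x ∈ K, T x = x := by
  choose! G hG_pos hG using IsConvexType.exists_midpoint_mem_approxFixedPoints
    (fun x hx y hy m h => hKconv x hx y hy m h.1 h.2) hconvtype
  obtain ⟨ε, hε_pos, hε_anti, hε_lim, hεG⟩ :=
    exists_seq_pos_antitone_tendsto_zero_le G hG_pos
  obtain ⟨x, hx⟩ := nonempty_iInter_of_midpoint_mem_antitone
    (A := fun n => approxFixedPoints K T (ε n))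
    (zero_lt_one.trans_le hp) hk geo (fun x y z m h => puc x y z m h.1 h.2)
    (fun n => approxFixedPoints_nonempty hK hinf (hε_pos n))
    (fun _ _ h => approxFixedPoints_mono (hε_anti h)) (hKb.subset (Set.sep_subset _ _))
    (fun n x y m hx hy => hG _ (hε_pos n) x y m
      (approxFixedPoints_mono (hεG n) hx) (approxFixedPoints_mono (hεG n) hy))
    (fun n => isClosed_approxFixedPoints hKcl hTc (ε n))
  rw [Set.mem_iInter] at hx
  refine ⟨x, (hx 0).1, (dist_eq_zero.1 (le_antisymm ?_ dist_nonneg)).symm⟩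
  exact ge_of_tendsto' hε_lim fun n => (hx n).2
end
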